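/- arXiv:0908.3127 — 3 statements merged into one kernel-verified Lean document; each statement's English description precedes it below -/
import Mathlib

section
/- Any generating set of oriented Reidemeister moves must contain at least two Ω1 moves. Formally: for any single Ω1 move m with effect vector v_m ∈ {(1,−1),(1,1),(−1,−1),(−1,1)} ⊂ ℤ × ℤ, the subgroup of ℤ × ℤ generated by v_m (together with the zero vectors contributed by Ω2 and Ω3 moves) does not contain all four Ω1 effect vectors. -/
/-!
The subgroup generated by `v` and `0` is `ℤ v`, and flipping the sign of the winding number
of `v` gives another Ω1 vector, which is not an integer multiple of `v`.
-/

theorem AddSubgroup.closure_pair_zero {G : Type*} [AddGroup G] (v : G) :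
    closure ({v, 0} : Set G) = zmultiples v := by
  rw [Set.insert_eq, closure_union_zero, zmultiples_eq_closure]

theorem Prod.mk_neg_notMem_zmultiples {a b : ℤ} (ha : a ≠ 0) (hb : b ≠ 0) :
    (a, -b) ∉ AddSubgroup.zmultiples (a, b) := by
  rintro ⟨n, hn⟩
  simp only [Prod.ext_iff, Prod.smul_mk, smul_eq_mul] at hn
  obtain ⟨hna, hnb⟩ := hn
  have hn1 : n = 1 := by
    simpa [ha] using (mul_left_eq_self₀.mp hna)
  subst hn1
  omega

/-- Any generating set must contain at least two Ω1 moves: for any single Ω1 effect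
vector `v`, the subgroup of `ℤ × ℤ` generated by `v` together with the zero vector
(contributed by Ω2 and Ω3 moves) does not contain all four Ω1 effect vectors. -/
theorem stmt_2 :
    ∀ v ∈ ({(1, -1), (1, 1), (-1, -1), (-1, 1)} : Set (ℤ × ℤ)),
      ¬ (({(1, -1), (1, 1), (-1, -1), (-1, 1)} : Set (ℤ × ℤ)) ⊆
        (AddSubgroup.closure ({v, 0} : Set (ℤ × ℤ)) : Set (ℤ × ℤ))) := by
  rintro v hv hsub
  rw [AddSubgroup.closure_pair_zero] at hsub
  have hv_ne : v.1 ≠ 0 ∧ v.2 ≠ 0 := by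
    rcases hv with rfl | rfl | rfl | rfl <;> decide
  have hflip_mem : (v.1, -v.2) ∈ ({(1, -1), (1, 1), (-1, -1), (-1, 1)} : Set (ℤ × ℤ)) := by
    rcases hv with rfl | rfl | rfl | rfl <;> simp
  exact Prod.mk_neg_notMem_zmultiples hv_ne.1 hv_ne.2 (hsub hflip_mem)
end

section
/- Let a state be a pair of finite lists of signs in {+1,−1} (one for each component of a 2-component tangle). Define a state to be positively weighted if all partial sums of both lists are non-negative. Suppose each allowed move either leaves both lists unchanged or inserts/deletes a consecutive (+1,−1) pair in one or both lists. Then positive weighting of both components is preserved under any finite sequence of allowed moves. In particular, since the trivial tangle state (empty lists) is positively weighted and the state ((−1,+1),(−1,+1)) resulting from Ω2b is not, no sequence of such moves transforms the former into the latter; hence the set consisting of all Ω1 moves, Ω2a, Ω2c (or Ω2d), and Ω3b does not generate Ω2b. -/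
/-- `L'` is obtained from `L` by inserting or deleting a consecutive (+1,−1) pair. -/
def InsDel (L L' : List ℤ) : Prop :=
  (∃ A B : List ℤ, L = A ++ B ∧ L' = A ++ [1, -1] ++ B) ∨
  (∃ A B : List ℤ, L = A ++ [1, -1] ++ B ∧ L' = A ++ B)

/-- An allowed move on a two-component state: leave both lists unchanged, or
insert/delete a consecutive (+1,−1) pair in one or both lists. -/
def AllowedMove (s s' : List ℤ × List ℤ) : Prop :=
  (s' = s) ∨
  (InsDel s.1 s'.1 ∧ s'.2 = s.2) ∨
  (s'.1 = s.1 ∧ InsDel s.2 s'.2) ∨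
  (InsDel s.1 s'.1 ∧ InsDel s.2 s'.2)

/-- A state is positively weighted if all partial sums of both lists are ≥ 0. -/
def PosWeighted (s : List ℤ × List ℤ) : Prop :=
  (∀ n : ℕ, 0 ≤ ((s.1.take n).sum)) ∧ (∀ n : ℕ, 0 ≤ ((s.2.take n).sum))

/-! With the running sum started at an offset `c`, the condition "all partial sums
are `≥ 0`" peels off one entry at a time: it holds for `x :: L` iff `0 ≤ c` and it holds for `L`
from `c + x`. A pair `1, -1` therefore only adds the conditions `0 ≤ c` and `0 ≤ c + 1`, the first
of which is already forced by the rest of the list. So inserting or deleting such a pair anywhere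
never changes positive weighting, and `[-1, 1]` has the negative partial sum `-1`. -/

namespace List

def PrefixSumsNonnegFrom (c : ℤ) (L : List ℤ) : Prop :=
  ∀ n : ℕ, 0 ≤ c + (L.take n).sum

namespace PrefixSumsNonnegFrom

theorem nonneg {c : ℤ} {L : List ℤ} (h : L.PrefixSumsNonnegFrom c) : 0 ≤ c := by
  simpa using h 0

theorem cons_iff {c x : ℤ} {L : List ℤ} :
    (x :: L).PrefixSumsNonnegFrom c ↔ 0 ≤ c ∧ L.PrefixSumsNonnegFrom (c + x) := by
  constructor
  · intro h
    exact ⟨h.nonneg, fun n => by simpa [add_assoc] using h (n + 1)⟩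
  · rintro ⟨hc, h⟩ (_ | n)
    · simpa using hc
    · simpa [add_assoc] using h n

theorem pair_cons_iff {c : ℤ} {L : List ℤ} :
    (1 :: -1 :: L).PrefixSumsNonnegFrom c ↔ L.PrefixSumsNonnegFrom c := by
  simp only [cons_iff, add_neg_cancel_right]
  exact ⟨fun h => h.2.2, fun h => ⟨h.nonneg, by linarith [h.nonneg], h⟩⟩

theorem append_congr {X Y : List ℤ} (hXY : ∀ c, X.PrefixSumsNonnegFrom c ↔ Y.PrefixSumsNonnegFrom c)
    (A : List ℤ) (c : ℤ) : (A ++ X).PrefixSumsNonnegFrom c ↔ (A ++ Y).PrefixSumsNonnegFrom c := by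
  induction A generalizing c with
  | nil => exact hXY c
  | cons a A ih => simp only [cons_append, cons_iff, ih]

theorem append_pair_append_iff {c : ℤ} (A B : List ℤ) :
    (A ++ [1, -1] ++ B).PrefixSumsNonnegFrom c ↔ (A ++ B).PrefixSumsNonnegFrom c := by
  rw [append_assoc]
  exact append_congr (fun _ => pair_cons_iff) A c

end PrefixSumsNonnegFrom

end List

open List.PrefixSumsNonnegFrom

theorem InsDel.prefixSumsNonnegFrom_iff {L L' : List ℤ} (h : InsDel L L') (c : ℤ) :
    L.PrefixSumsNonnegFrom c ↔ L'.PrefixSumsNonnegFrom c := by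
  rcases h with ⟨A, B, rfl, rfl⟩ | ⟨A, B, rfl, rfl⟩
  · exact (append_pair_append_iff A B).symm
  · exact append_pair_append_iff A B

theorem posWeighted_iff_prefixSumsNonnegFrom (s : List ℤ × List ℤ) :
    PosWeighted s ↔ s.1.PrefixSumsNonnegFrom 0 ∧ s.2.PrefixSumsNonnegFrom 0 := by
  simp only [PosWeighted, List.PrefixSumsNonnegFrom, zero_add]

theorem AllowedMove.posWeighted_iff {s s' : List ℤ × List ℤ} (h : AllowedMove s s') :
    PosWeighted s ↔ PosWeighted s' := by
  rw [posWeighted_iff_prefixSumsNonnegFrom, posWeighted_iff_prefixSumsNonnegFrom]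
  rcases h with rfl | ⟨h₁, h₂⟩ | ⟨h₁, h₂⟩ | ⟨h₁, h₂⟩
  · rfl
  · rw [h₁.prefixSumsNonnegFrom_iff, h₂]
  · rw [h₁, h₂.prefixSumsNonnegFrom_iff]
  · rw [h₁.prefixSumsNonnegFrom_iff, h₂.prefixSumsNonnegFrom_iff]

theorem PosWeighted.of_reflTransGen {s s' : List ℤ × List ℤ} (hs : PosWeighted s)
    (h : Relation.ReflTransGen AllowedMove s s') : PosWeighted s' := by
  induction h with
  | refl => exact hs
  | tail _ hmove ih => exact hmove.posWeighted_iff.mp ih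

/-- Positive weighting of both components is preserved by any finite sequence of
allowed moves; the trivial state is positively weighted while the Ω2b state
`([−1,+1],[−1,+1])` is not, so no sequence of allowed moves transforms the former
into the latter (hence all Ω1 moves, Ω2a, Ω2c (or Ω2d), and Ω3b do not generate Ω2b). -/
theorem stmt_8 :
    (∀ s s' : List ℤ × List ℤ, PosWeighted s →
      Relation.ReflTransGen AllowedMove s s' → PosWeighted s') ∧
    PosWeighted (([], []) : List ℤ × List ℤ) ∧
    ¬ PosWeighted (([-1, 1], [-1, 1]) : List ℤ × List ℤ) ∧
    ¬ Relation.ReflTransGen AllowedMove (([], []) : List ℤ × List ℤ)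
      (([-1, 1], [-1, 1]) : List ℤ × List ℤ) := by
  have trivial_posWeighted : PosWeighted (([], []) : List ℤ × List ℤ) := by
    simp [PosWeighted]
  have not_posWeighted : ¬ PosWeighted (([-1, 1], [-1, 1]) : List ℤ × List ℤ) :=
    fun h => absurd (h.1 1) (by decide)
  exact ⟨fun _ _ hs h => hs.of_reflTransGen h, trivial_posWeighted, not_posWeighted,
    fun h => not_posWeighted (trivial_posWeighted.of_reflTransGen h)⟩
end

section
/- Any generating set of oriented Reidemeister moves containing Ω3b as its only type-3 move must contain at least two Ω2 moves. Formally, in the positivity model: the set of positively-weighted two-component states is closed under the moves of S_b ∪ {Ω2a} ∪ {Ω2c} and under S_b ∪ {Ω2a} ∪ {Ω2d} (where S_b consists of all Ω1 moves and Ω3b), but Ω2b can take a positively weighted state to a non-positively-weighted one; hence neither set generates Ω2b. -/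
/-- A move of `S_b ∪ {Ω2a} ∪ {Ω2c}`: all Ω1 moves and Ω3b fix both lists, Ω2a
inserts/deletes a (+1,−1) pair in both lists, Ω2c does so in the second list only. -/
def MoveAC (s s' : List ℤ × List ℤ) : Prop :=
  (s' = s) ∨
  (InsDel s.1 s'.1 ∧ InsDel s.2 s'.2) ∨
  (s'.1 = s.1 ∧ InsDel s.2 s'.2)

/-- A move of `S_b ∪ {Ω2a} ∪ {Ω2d}`: all Ω1 moves and Ω3b fix both lists, Ω2a
inserts/deletes a (+1,−1) pair in both lists, Ω2d does so in the first list only. -/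
def MoveAD (s s' : List ℤ × List ℤ) : Prop :=
  (s' = s) ∨
  (InsDel s.1 s'.1 ∧ InsDel s.2 s'.2) ∨
  (InsDel s.1 s'.1 ∧ s'.2 = s.2)

/-!
Inserting or deleting a consecutive `(+1, −1)` pair in a list only adds or removes the
partial sum `s + 1` right after an existing partial sum `s`, so it preserves
nonnegativity of all partial sums. Every move of `S_b ∪ {Ω2a, Ω2c}` and of
`S_b ∪ {Ω2a, Ω2d}` acts on each list by the identity or by such an insertion/deletion,
hence preserves positive weight, whereas the state `([−1, 1], [−1, 1])` has partial
sum `−1`.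
-/

-- `PosWeighted s` is definitionally `PartialSumsGE 0 s.1 ∧ PartialSumsGE 0 s.2`.
def PartialSumsGE (c : ℤ) (L : List ℤ) : Prop :=
  ∀ n : ℕ, c ≤ (L.take n).sum

theorem PartialSumsGE.le_sum {c : ℤ} {L : List ℤ} (h : PartialSumsGE c L) : c ≤ L.sum := by
  simpa using h L.length

theorem partialSumsGE_append {c : ℤ} {A C : List ℤ} :
    PartialSumsGE c (A ++ C) ↔ PartialSumsGE c A ∧ PartialSumsGE (c - A.sum) C := by
  simp only [PartialSumsGE, List.take_append, List.sum_append]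
  constructor
  · intro h
    refine ⟨fun n => ?_, fun n => ?_⟩
    · rcases le_total n A.length with hn | hn
      · simpa [Nat.sub_eq_zero_of_le hn] using h n
      · simpa [List.take_of_length_le hn] using h A.length
    · have := h (A.length + n)
      rw [List.take_of_length_le (by omega), Nat.add_sub_cancel_left] at this
      linarith
  · rintro ⟨hA, hC⟩ n
    rcases le_total n A.length with hn | hn
    · simpa [Nat.sub_eq_zero_of_le hn] using hA n
    · rw [List.take_of_length_le hn]
      linarith [hC (n - A.length)]

theorem partialSumsGE_one_neg_one {c : ℤ} (hc : c ≤ 0) : PartialSumsGE c [1, -1] := by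
  rintro (_ | _ | n) <;> simp <;> omega

theorem partialSumsGE_insert_one_neg_one_iff {c : ℤ} {A B : List ℤ} :
    PartialSumsGE c (A ++ [1, -1] ++ B) ↔ PartialSumsGE c (A ++ B) := by
  have hpair : ([1, -1] : List ℤ).sum = 0 := by decide
  rw [List.append_assoc, partialSumsGE_append, partialSumsGE_append, partialSumsGE_append,
    hpair, sub_zero]
  exact and_congr_right fun hA =>
    and_iff_right (partialSumsGE_one_neg_one (sub_nonpos.mpr hA.le_sum))

theorem InsDel.partialSumsGE_iff {c : ℤ} {L L' : List ℤ} (h : InsDel L L') :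
    PartialSumsGE c L ↔ PartialSumsGE c L' := by
  rcases h with ⟨A, B, rfl, rfl⟩ | ⟨A, B, rfl, rfl⟩
  · exact partialSumsGE_insert_one_neg_one_iff.symm
  · exact partialSumsGE_insert_one_neg_one_iff

theorem PosWeighted.of_moveAC {s s' : List ℤ × List ℤ} (hs : PosWeighted s) (h : MoveAC s s') :
    PosWeighted s' := by
  obtain ⟨h₁, h₂⟩ := hs
  rcases h with rfl | ⟨e₁, e₂⟩ | ⟨e₁, e₂⟩
  · exact ⟨h₁, h₂⟩
  · exact ⟨e₁.partialSumsGE_iff.mp h₁, e₂.partialSumsGE_iff.mp h₂⟩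
  · exact ⟨e₁ ▸ h₁, e₂.partialSumsGE_iff.mp h₂⟩

theorem PosWeighted.of_moveAD {s s' : List ℤ × List ℤ} (hs : PosWeighted s) (h : MoveAD s s') :
    PosWeighted s' := by
  obtain ⟨h₁, h₂⟩ := hs
  rcases h with rfl | ⟨e₁, e₂⟩ | ⟨e₁, e₂⟩
  · exact ⟨h₁, h₂⟩
  · exact ⟨e₁.partialSumsGE_iff.mp h₁, e₂.partialSumsGE_iff.mp h₂⟩
  · exact ⟨e₁.partialSumsGE_iff.mp h₁, e₂ ▸ h₂⟩

theorem Relation.ReflTransGen.of_invariant {α : Type*} {r : α → α → Prop} {P : α → Prop}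
    (hr : ∀ a b, P a → r a b → P b) {a b : α} (h : ReflTransGen r a b) (ha : P a) : P b := by
  induction h with
  | refl => exact ha
  | tail _ hbc ih => exact hr _ _ ih hbc

theorem posWeighted_nil : PosWeighted (([], []) : List ℤ × List ℤ) :=
  ⟨fun n => by simp, fun n => by simp⟩

theorem not_posWeighted_neg_one_one : ¬ PosWeighted (([-1, 1], [-1, 1]) : List ℤ × List ℤ) :=
  fun h => absurd (h.1 1) (by decide)

/-- Positively weighted states are closed under the moves of `S_b ∪ {Ω2a, Ω2c}` and
of `S_b ∪ {Ω2a, Ω2d}`, but Ω2b takes the (positively weighted) trivial state to the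
non-positively-weighted state `([−1,+1],[−1,+1])`; hence neither set generates Ω2b,
and any generating set with Ω3b as its only type-3 move has at least two Ω2 moves. -/
theorem stmt_14 :
    (∀ s s' : List ℤ × List ℤ, PosWeighted s → MoveAC s s' → PosWeighted s') ∧
    (∀ s s' : List ℤ × List ℤ, PosWeighted s → MoveAD s s' → PosWeighted s') ∧
    PosWeighted (([], []) : List ℤ × List ℤ) ∧
    ¬ PosWeighted (([-1, 1], [-1, 1]) : List ℤ × List ℤ) ∧
    ¬ Relation.ReflTransGen MoveAC (([], []) : List ℤ × List ℤ)
        (([-1, 1], [-1, 1]) : List ℤ × List ℤ) ∧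
    ¬ Relation.ReflTransGen MoveAD (([], []) : List ℤ × List ℤ)
        (([-1, 1], [-1, 1]) : List ℤ × List ℤ) := by
  have hAC : ∀ s s' : List ℤ × List ℤ, PosWeighted s → MoveAC s s' → PosWeighted s' :=
    fun _ _ => PosWeighted.of_moveAC
  have hAD : ∀ s s' : List ℤ × List ℤ, PosWeighted s → MoveAD s s' → PosWeighted s' :=
    fun _ _ => PosWeighted.of_moveAD
  exact ⟨hAC, hAD, posWeighted_nil, not_posWeighted_neg_one_one,
    fun h => not_posWeighted_neg_one_one (h.of_invariant hAC posWeighted_nil),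
    fun h => not_posWeighted_neg_one_one (h.of_invariant hAD posWeighted_nil)⟩
end
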